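/- For the 2D bicrossproduct model, the contorsion tensor S^κ_{αβ} = 2b ε_{αμ} x^μ ε_{βν} g^{κν} (with x^0 = t, x^1 = r, ε_{01} = 1 = −ε_{10}) has contraction S^μ = S^μ_{αβ} g^{αβ} = 2x^μ/r², and its covariant derivatives with respect to the quantising connection ∇ (with nonzero Christoffel symbols Γ^0_{01} = −1/r, Γ^0_{10} = 1/r) satisfy S^μ_{;0} = 0 and S^μ_{;1} = −2x^μ/r³. -/

import Mathlib

/-- Partial derivative of `f : (Fin n → ℝ) → ℝ` in the `i`-th coordinate direction. -/
noncomputable def pd {n : ℕ} (i : Fin n) (f : (Fin n → ℝ) → ℝ) (x : Fin n → ℝ) : ℝ :=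
  fderiv ℝ f x (Pi.single i 1)

/-- The antisymmetric symbol on `Fin 2` with `eps2 0 1 = 1`. -/
noncomputable def eps2 (α β : Fin 2) : ℝ :=
  if α = 0 ∧ β = 1 then 1 else if α = 1 ∧ β = 0 then -1 else 0

/-- The inverse bicrossproduct metric (coordinates `x = (t, r)`):
`g^{00} = (1+bt²)/(br²)`, `g^{01} = g^{10} = t/r`, `g^{11} = 1`. -/
noncomputable def ginvBic (b : ℝ) (μ ν : Fin 2) (x : Fin 2 → ℝ) : ℝ :=
  if μ = 0 ∧ ν = 0 then (1 + b * (x 0)^2) / (b * (x 1)^2)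
  else if (μ = 0 ∧ ν = 1) ∨ (μ = 1 ∧ ν = 0) then x 0 / x 1
  else 1

/-- The contorsion tensor `S^κ_{αβ} = 2b ε_{αμ} x^μ ε_{βν} g^{κν}` of the 2D
bicrossproduct model. -/
noncomputable def SBic (b : ℝ) (κ α β : Fin 2) (x : Fin 2 → ℝ) : ℝ :=
  2 * b * (∑ μ, eps2 α μ * x μ) * (∑ ν, eps2 β ν * ginvBic b κ ν x)

/-- The contorsion vector `S^μ = S^μ_{αβ} g^{αβ}`. -/
noncomputable def SvecBic (b : ℝ) (μ : Fin 2) (x : Fin 2 → ℝ) : ℝ :=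
  ∑ α, ∑ β, SBic b μ α β x * ginvBic b α β x

/-- Christoffel symbols of the quantising connection: `Γ^0_{01} = −1/r`, `Γ^0_{10} = 1/r`,
all others zero. -/
noncomputable def ΓqBic (α β γ : Fin 2) (x : Fin 2 → ℝ) : ℝ :=
  if α = 0 ∧ β = 0 ∧ γ = 1 then -(1 / x 1)
  else if α = 0 ∧ β = 1 ∧ γ = 0 then 1 / x 1
  else 0

/-! The one-form `v = r dt − t dr` has components `v_α = ε_{αμ} x^μ`, and the metric raises it
to `∂_t / (b r)`. Hence the double contraction collapses to `S^μ = (2/r) g^{μ1} = 2x^μ/r²`, and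
the covariant derivatives follow by differentiating this closed form, valid on the open set
`r ≠ 0`. -/

open Topology

lemma pd_congr_of_eventuallyEq {n : ℕ} {f g : (Fin n → ℝ) → ℝ} {x : Fin n → ℝ} (i : Fin n)
    (h : f =ᶠ[𝓝 x] g) : pd i f x = pd i g x := by
  rw [pd, pd, h.fderiv_eq]

lemma pd_const_mul_apply_div_sq {n : ℕ} (c : ℝ) (i j k : Fin n) {x : Fin n → ℝ} (hx : x k ≠ 0) :
    pd i (fun y => c * y j / y k ^ 2) x =
      c * ((Pi.single i 1 : Fin n → ℝ) j * x k - 2 * x j * (Pi.single i 1 : Fin n → ℝ) k) /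
        x k ^ 3 := by
  have hnum := (hasFDerivAt_apply (𝕜 := ℝ) j x).const_mul c
  have hden := (hasFDerivAt_inv (𝕜 := ℝ) (pow_ne_zero 2 hx)).comp x
    ((hasFDerivAt_apply (𝕜 := ℝ) k x).pow 2)
  have hsplit : (fun y : Fin n → ℝ => c * y j / y k ^ 2) =
      (fun y => c * y j) * ((fun t => t⁻¹) ∘ fun y => y k ^ 2) := by
    ext y; simp [div_eq_mul_inv]
  rw [pd, hsplit, (hnum.mul hden).fderiv]
  simp only [add_apply, smul_apply, Function.comp_apply, ContinuousLinearMap.comp_apply,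
    ContinuousLinearMap.proj_apply, ContinuousLinearMap.toSpanSingleton_apply, smul_eq_mul,
    nsmul_eq_mul]
  field_simp
  ring

lemma sum_eps2_mul_ginvBic {b : ℝ} (hb : b ≠ 0) {x : Fin 2 → ℝ} (hx : x 1 ≠ 0) (β : Fin 2) :
    ∑ α, (∑ μ, eps2 α μ * x μ) * ginvBic b α β x = if β = 0 then 1 / (b * x 1) else 0 := by
  fin_cases β <;>
    simp only [Fin.zero_eta, Fin.mk_one, Fin.sum_univ_two, eps2, ginvBic, Fin.isValue, zero_ne_one,
      one_ne_zero, and_true, and_false, or_false, false_or, ↓reduceIte] <;>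
    field_simp <;> ring

lemma svecBic_eq {b : ℝ} (hb : b ≠ 0) (μ : Fin 2) {x : Fin 2 → ℝ} (hx : x 1 ≠ 0) :
    SvecBic b μ x = 2 * x μ / x 1 ^ 2 := by
  calc SvecBic b μ x
      = 2 * b * ∑ β, (∑ ν, eps2 β ν * ginvBic b μ ν x) *
          ∑ α, (∑ ρ, eps2 α ρ * x ρ) * ginvBic b α β x := by
        rw [SvecBic, Finset.sum_comm, Finset.mul_sum]
        refine Finset.sum_congr rfl fun β _ => ?_
        rw [Finset.mul_sum, Finset.mul_sum]
        exact Finset.sum_congr rfl fun α _ => by rw [SBic]; ring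
    _ = 2 * ginvBic b μ 1 x / x 1 := by
        simp only [sum_eps2_mul_ginvBic hb hx]
        simp only [Fin.sum_univ_two, eps2, Fin.isValue, zero_ne_one, one_ne_zero, and_true,
          and_false, ↓reduceIte]
        field_simp
        ring
    _ = 2 * x μ / x 1 ^ 2 := by
        fin_cases μ <;>
          simp only [Fin.zero_eta, Fin.mk_one, ginvBic, Fin.isValue, zero_ne_one, one_ne_zero,
            and_true, and_false, or_false, ↓reduceIte] <;>
          field_simp

lemma svecBic_eventuallyEq {b : ℝ} (hb : b ≠ 0) (μ : Fin 2) {x : Fin 2 → ℝ} (hx : x 1 ≠ 0) :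
    SvecBic b μ =ᶠ[𝓝 x] fun y => 2 * y μ / y 1 ^ 2 :=
  ((isOpen_ne_fun (continuous_apply 1) continuous_const).eventually_mem hx).mono
    fun _ hy => svecBic_eq hb μ hy

lemma sum_ΓqBic_mul (μ γ : Fin 2) (x V : Fin 2 → ℝ) :
    ∑ ν, ΓqBic μ γ ν x * V ν =
      if μ = 0 then (if γ = 0 then -V 1 else V 0) / x 1 else 0 := by
  fin_cases μ <;> fin_cases γ <;> simp [ΓqBic, div_eq_inv_mul]

/-- In the 2D bicrossproduct model the contorsion vector is `S^μ = 2x^μ/r²` and its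
covariant derivatives `S^μ_{;γ} = ∂_γ S^μ + Γ^μ_{γν} S^ν` with respect to the quantising
connection satisfy `S^μ_{;0} = 0` and `S^μ_{;1} = −2x^μ/r³`. -/
theorem stmt18 (b : ℝ) (hb : b ≠ 0) :
    ∀ x : Fin 2 → ℝ, 0 < x 1 → ∀ μ : Fin 2,
      (SvecBic b μ x = 2 * x μ / (x 1)^2) ∧
      (pd 0 (SvecBic b μ) x + (∑ ν, ΓqBic μ 0 ν x * SvecBic b ν x) = 0) ∧
      (pd 1 (SvecBic b μ) x + (∑ ν, ΓqBic μ 1 ν x * SvecBic b ν x)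
        = -(2 * x μ) / (x 1)^3) := by
  intro x hx μ
  have hr : x 1 ≠ 0 := hx.ne'
  have hpd (i : Fin 2) : pd i (SvecBic b μ) x =
      2 * ((Pi.single i 1 : Fin 2 → ℝ) μ * x 1 - 2 * x μ * (Pi.single i 1 : Fin 2 → ℝ) 1) /
        x 1 ^ 3 := by
    rw [pd_congr_of_eventuallyEq i (svecBic_eventuallyEq hb μ hr),
      pd_const_mul_apply_div_sq 2 i μ 1 hr]
  refine ⟨svecBic_eq hb μ hr, ?_, ?_⟩ <;>
  · rw [hpd, sum_ΓqBic_mul, svecBic_eq hb 0 hr, svecBic_eq hb 1 hr]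
    fin_cases μ <;>
      simp only [Fin.zero_eta, Fin.mk_one, Pi.single_eq_same, Pi.single_eq_of_ne, ne_eq,
        zero_ne_one, one_ne_zero, not_false_eq_true, ↓reduceIte] <;>
      field_simp <;> ring
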